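/- arXiv:2501.13686 — 2 statements merged into one kernel-verified Lean document; each statement's English description precedes it below -/
import Mathlib

section
/- For every real K < −1, the function φ_K(d) = −d²/4 − K(1 − e^{−d²/4}) attains its global maximum over ℝ exactly at the two points d = ±2√(log(−K)), the maximum value is −K − 1 − log(−K), and this value is strictly positive. (Hence in the Leader's Dilemma the leaders obtain a strictly better payoff than at x₁ = x₂ by placing themselves at distance 2√(log(−K)) from each other.) -/
/-- Leader's Dilemma: global maximizers of the reduced payoff.
For `K < −1`, the function `φ_K(d) = −d²/4 − K(1 − e^{−d²/4})` attains its
global maximum over ℝ exactly at `d = ±2√(log(−K))`, with maximum value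
`−K − 1 − log(−K)`, which is strictly positive. -/
theorem leaders_dilemma_global_max (K : ℝ) (hK : K < -1) :
    let φ : ℝ → ℝ := fun d => -d ^ 2 / 4 - K * (1 - Real.exp (-d ^ 2 / 4))
    let d₀ : ℝ := 2 * Real.sqrt (Real.log (-K))
    let M : ℝ := -K - 1 - Real.log (-K)
    (∀ d : ℝ, φ d ≤ M) ∧ φ d₀ = M ∧ φ (-d₀) = M ∧
      (∀ d : ℝ, φ d = M → d = d₀ ∨ d = -d₀) ∧ 0 < M := by
  intro φ d₀ M
  set c : ℝ := -K with hc
  have hc1 : 1 < c := by simp [hc]; linarith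
  have hc0 : 0 < c := by linarith
  have hlogpos : 0 < Real.log c := Real.log_pos hc1
  have hlog : Real.exp (Real.log c) = c := Real.exp_log hc0
  -- key: c * exp(-t) = exp (log c - t)
  have hkey : ∀ t : ℝ, c * Real.exp (-t) = Real.exp (Real.log c - t) := by
    intro t
    rw [sub_eq_add_neg, Real.exp_add, hlog]
  have hφ : ∀ d : ℝ, φ d = -(d ^ 2 / 4) + c - Real.exp (Real.log c - (d ^ 2 / 4)) := by
    intro d
    have := hkey (d ^ 2 / 4)
    simp only [φ, hc] at *
    have : -(d^2)/4 = -(d^2/4) := by ring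
    rw [this]
    rw [← hkey]
    ring
  have hd₀sq : d₀ ^ 2 = 4 * Real.log c := by
    have : d₀ = 2 * Real.sqrt (Real.log c) := rfl
    rw [this]
    rw [mul_pow, Real.sq_sqrt hlogpos.le]
    ring
  have hφd₀ : φ d₀ = M := by
    rw [hφ, hd₀sq]
    have h4 : 4 * Real.log c / 4 = Real.log c := by ring
    rw [h4, sub_self, Real.exp_zero]
    simp [M, hc]
    ring
  refine ⟨?_, hφd₀, ?_, ?_, ?_⟩
  · intro d
    rw [hφ]
    have := Real.add_one_le_exp (Real.log c - d ^ 2 / 4)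
    simp only [M, hc]
    linarith
  · have : φ (-d₀) = φ d₀ := by simp [φ, neg_pow]
    rw [this, hφd₀]
  · intro d hd
    rw [hφ d] at hd
    simp only [M, hc] at hd
    have heq : Real.exp (Real.log c - d ^ 2 / 4) = (Real.log c - d ^ 2 / 4) + 1 := by
      linarith
    have hzero : Real.log c - d ^ 2 / 4 = 0 := by
      by_contra h
      have := Real.add_one_lt_exp h
      linarith
    have hsq : d ^ 2 = d₀ ^ 2 := by rw [hd₀sq]; linarith
    have := sq_eq_sq_iff_eq_or_eq_neg.mp hsq
    exact this
  · have := Real.log_lt_sub_one_of_pos hc0 (by linarith : c ≠ 1)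
    simp only [M, hc]
    linarith
end

section
/- In the Olsder game with player 1 as Stackelberg leader and player 2 as follower (whose best response to x₁ is x₂ = x₁/4 + 153/5), the leader's payoff under the follower's best response is strictly smaller than its consistent-conjectural-equilibrium payoff, for every leader strategy: for all x₁ ∈ ℝ, f₁(x₁, x₁/4 + 153/5) < 161604/5 = f₁(822/5, 81). -/
/-- Olsder game: the conjectural equilibrium payoff strictly
dominates the leader's payoff under any strategy with the follower best
responding.
With player 1 as Stackelberg leader and player 2 best responding via
`x₂ = x₁/4 + 153/5`, the leader's payoff is strictly below the consistent
conjectural equilibrium payoff `161604/5 = f₁(822/5, 81)` for every `x₁`. -/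
theorem olsder_leader_payoff_below_cce :
    let f₁ : ℝ → ℝ → ℝ := fun x₁ x₂ => (x₁ - 84) * (-(25 / 2) * x₁ + 21 * x₂ + 756)
    (∀ x₁ : ℝ, f₁ x₁ (x₁ / 4 + 153 / 5) < 161604 / 5) ∧
      f₁ (822 / 5) 81 = 161604 / 5 := by
  refine ⟨fun x₁ => ?_, by norm_num⟩
  simp only
  nlinarith [sq_nonneg (145 * x₁ - 20076)]
end
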